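/- arXiv:1805.00602 — 2 statements merged into one kernel-verified Lean document; each statement's English description precedes it below -/
import Mathlib

section
/- Let C, A, B ∈ M_n(ℂ) be such that W_C(A) and W_C(B) are convex, disjoint, and their union lies on a straight line in ℂ. Then for F = conv{A,B}, W_C(F) = conv(W_C(A) ∪ W_C(B)); in particular W_C(F) is convex. -/
open Matrix

/-- The C-numerical range of a matrix A: `{tr(C U* A U) : U unitary}`. -/
def cNumRange {n : ℕ} (C A : Matrix (Fin n) (Fin n) ℂ) : Set ℂ :=
  {z | ∃ U : Matrix (Fin n) (Fin n) ℂ, U ∈ Matrix.unitaryGroup (Fin n) ℂ ∧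
    z = (C * Uᴴ * A * U).trace}

/-- The C-numerical range of a set of matrices: union of the C-numerical ranges. -/
def cNumRangeSet {n : ℕ} (C : Matrix (Fin n) (Fin n) ℂ)
    (F : Set (Matrix (Fin n) (Fin n) ℂ)) : Set ℂ :=
  ⋃ A ∈ F, cNumRange C A

/-!
For each unitary `U`, the map `X ↦ tr(C U* X U)` is real-linear, so `W_C(F)` is the union over
`U` of the segments `[tr(C U* A U), tr(C U* B U)]`, which lies in `conv(W_C(A) ∪ W_C(B))`.
Conversely, parametrize the common line by `ℝ`: two disjoint intervals of `ℝ` lie on either side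
of each other, so for `a = tr(C U* A U)`, `b = tr(C V* B V)` the segment `[a, b]` is covered by
`[a, tr(C U* B U)] ∪ [tr(C V* A V), b]`.
-/

open Set

theorem Set.OrdConnected.forall_le_or_forall_ge_of_disjoint {α : Type*} [LinearOrder α]
    {s t : Set α} (hs : s.OrdConnected) (ht : t.OrdConnected) (hd : Disjoint s t) :
    (∀ x ∈ s, ∀ y ∈ t, x ≤ y) ∨ (∀ x ∈ s, ∀ y ∈ t, y ≤ x) := by
  by_contra! ⟨⟨x, hx, y, hy, hyx⟩, ⟨x', hx', y', hy', hxy'⟩⟩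
  rcases le_or_gt y' x with h | h
  · exact disjoint_left.1 hd (hs.out hx' hx ⟨hxy'.le, h⟩) hy'
  · exact disjoint_left.1 hd hx (ht.out hy hy' ⟨hyx.le, h.le⟩)

theorem Set.Icc_subset_Icc_union_Icc_of_le {α : Type*} [LinearOrder α] {a b a' b' : α}
    (h : a' ≤ b') : Icc a b ⊆ Icc a b' ∪ Icc a' b :=
  Icc_subset_Icc_union_Icc.trans (union_subset_union_right _ (Icc_subset_Icc_left h))

theorem Set.OrdConnected.uIcc_subset_uIcc_union_uIcc {α : Type*} [LinearOrder α]
    {s t : Set α} (hs : s.OrdConnected) (ht : t.OrdConnected) (hd : Disjoint s t)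
    {a a' b b' : α} (ha : a ∈ s) (ha' : a' ∈ s) (hb : b ∈ t) (hb' : b' ∈ t) :
    uIcc a b ⊆ uIcc a b' ∪ uIcc a' b := by
  rcases hs.forall_le_or_forall_ge_of_disjoint ht hd with hst | hts
  · rw [uIcc_of_le (hst a ha b hb), uIcc_of_le (hst a ha b' hb'), uIcc_of_le (hst a' ha' b hb)]
    exact Icc_subset_Icc_union_Icc_of_le (hst a' ha' b' hb')
  · rw [uIcc_of_ge (hts a ha b hb), uIcc_of_ge (hts a ha b' hb'), uIcc_of_ge (hts a' ha' b hb),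
      union_comm]
    exact Icc_subset_Icc_union_Icc_of_le (hts a' ha' b' hb')

theorem Collinear.exists_affineMap_subset_range {k V P : Type*} [DivisionRing k]
    [AddCommGroup V] [Module k V] [AddTorsor V P] {s : Set P} (h : Collinear k s) :
    ∃ φ : k →ᵃ[k] P, s ⊆ range φ := by
  obtain ⟨p₀, v, hv⟩ := (collinear_iff_exists_forall_eq_smul_vadd s).1 h
  refine ⟨AffineMap.lineMap p₀ (v +ᵥ p₀), fun p hp => ?_⟩
  obtain ⟨r, rfl⟩ := hv p hp
  exact ⟨r, AffineMap.lineMap_vadd_apply _ _ _⟩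

theorem Convex.segment_subset_segment_union_segment_of_collinear {E : Type*} [AddCommGroup E]
    [Module ℝ E] {s t : Set E} (hs : Convex ℝ s) (ht : Convex ℝ t) (hd : Disjoint s t)
    (hst : Collinear ℝ (s ∪ t)) {a a' b b' : E}
    (ha : a ∈ s) (ha' : a' ∈ s) (hb : b ∈ t) (hb' : b' ∈ t) :
    segment ℝ a b ⊆ segment ℝ a b' ∪ segment ℝ a' b := by
  obtain ⟨φ, hφ⟩ := hst.exists_affineMap_subset_range
  obtain ⟨α, rfl⟩ := hφ (mem_union_left t ha)
  obtain ⟨α', rfl⟩ := hφ (mem_union_left t ha')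
  obtain ⟨β, rfl⟩ := hφ (mem_union_right s hb)
  obtain ⟨β', rfl⟩ := hφ (mem_union_right s hb')
  simp only [← image_segment, segment_eq_uIcc, ← image_union]
  exact image_mono <| (hs.affine_preimage φ).ordConnected.uIcc_subset_uIcc_union_uIcc
    (ht.affine_preimage φ).ordConnected (hd.preimage φ) ha ha' hb hb'

theorem iUnion_segment_eq_convexHull_union {X E : Type*} [AddCommGroup E] [Module ℝ E]
    {f g : X → E} (hf : Convex ℝ (range f)) (hg : Convex ℝ (range g))
    (hd : Disjoint (range f) (range g)) (hfg : Collinear ℝ (range f ∪ range g)) :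
    ⋃ x, segment ℝ (f x) (g x) = convexHull ℝ (range f ∪ range g) := by
  refine subset_antisymm (iUnion_subset fun x => ?_) fun p hp => ?_
  · exact segment_subset_convexHull (mem_union_left _ (mem_range_self x))
      (mem_union_right _ (mem_range_self x))
  cases isEmpty_or_nonempty X
  · simp [range_eq_empty f, range_eq_empty g] at hp
  rw [convexHull_union (range_nonempty f) (range_nonempty g), hf.convexHull_eq,
    hg.convexHull_eq] at hp
  obtain ⟨_, ⟨x, rfl⟩, _, ⟨y, rfl⟩, hp⟩ := mem_convexJoin.1 hp
  rcases hf.segment_subset_segment_union_segment_of_collinear hg hd hfg (mem_range_self x)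
    (mem_range_self y) (mem_range_self y) (mem_range_self x) hp with hpx | hpy
  exacts [mem_iUnion_of_mem x hpx, mem_iUnion_of_mem y hpy]

def cTraceMap {n : ℕ} (C A : Matrix (Fin n) (Fin n) ℂ) (U : unitaryGroup (Fin n) ℂ) : ℂ :=
  (C * (U : Matrix (Fin n) (Fin n) ℂ)ᴴ * A * U).trace

theorem range_cTraceMap {n : ℕ} (C A : Matrix (Fin n) (Fin n) ℂ) :
    range (cTraceMap C A) = cNumRange C A := by
  ext z
  simp [cNumRange, cTraceMap, eq_comm]

theorem image_segment_cTraceMap {n : ℕ} (C A B : Matrix (Fin n) (Fin n) ℂ)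
    (U : unitaryGroup (Fin n) ℂ) :
    (cTraceMap C · U) '' segment ℝ A B = segment ℝ (cTraceMap C A U) (cTraceMap C B U) :=
  image_segment ℝ (traceLinearMap (Fin n) ℝ ℂ ∘ₗ
    LinearMap.mulRight ℝ (U : Matrix (Fin n) (Fin n) ℂ) ∘ₗ
    LinearMap.mulLeft ℝ (C * (U : Matrix (Fin n) (Fin n) ℂ)ᴴ)).toAffineMap A B

theorem cNumRangeSet_segment {n : ℕ} (C A B : Matrix (Fin n) (Fin n) ℂ) :
    cNumRangeSet C (segment ℝ A B) = ⋃ U, segment ℝ (cTraceMap C A U) (cTraceMap C B U) := by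
  simp_rw [← image_segment_cTraceMap, cNumRangeSet, ← range_cTraceMap]
  ext z
  simp only [mem_iUnion, mem_range, mem_image]
  exact ⟨fun ⟨X, hX, U, hU⟩ => ⟨U, X, hX, hU⟩, fun ⟨U, X, hX, hU⟩ => ⟨X, hX, U, hU⟩⟩

theorem stmt_12 {n : ℕ} (C A B : Matrix (Fin n) (Fin n) ℂ)
    (hA : Convex ℝ (cNumRange C A)) (hB : Convex ℝ (cNumRange C B))
    (hd : Disjoint (cNumRange C A) (cNumRange C B))
    (hline : Collinear ℝ (cNumRange C A ∪ cNumRange C B)) :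
    cNumRangeSet C (segment ℝ A B)
      = convexHull ℝ (cNumRange C A ∪ cNumRange C B) ∧
    Convex ℝ (cNumRangeSet C (segment ℝ A B)) := by
  simp only [← range_cTraceMap] at hA hB hd hline ⊢
  rw [cNumRangeSet_segment, iUnion_segment_eq_convexHull_union hA hB hd hline]
  exact ⟨rfl, convex_convexHull ℝ _⟩
end

section
/- Let A_1, …, A_m ∈ M_n(ℂ) and F = conv{A_1, …, A_m}. For each unit vector x ∈ ℂⁿ, let 𝒜_x = diag(x*A_1x, …, x*A_mx) ∈ M_m(ℂ), and let F̂ = {𝒜_x : x ∈ ℂⁿ, x*x = 1}. Then W(F) = W(F̂) = W(conv F̂). -/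
open Matrix

/-- The classical numerical range of a matrix: `{x* X x : x a unit vector}`. -/
def numRange {n : ℕ} (X : Matrix (Fin n) (Fin n) ℂ) : Set ℂ :=
  {z | ∃ x : Fin n → ℂ, star x ⬝ᵥ x = 1 ∧ z = star x ⬝ᵥ X.mulVec x}

/-- The numerical range of a set of matrices: union of the numerical ranges. -/
def numRangeSet {n : ℕ} (F : Set (Matrix (Fin n) (Fin n) ℂ)) : Set ℂ :=
  ⋃ X ∈ F, numRange X

/-!
For a unit vector `y ∈ ℂ^m` the weights `|y_j|²` range over the whole standard simplex, so
`W(diag d) = conv {d_j}`. Hence both `W(conv {A_j})` and `W(F̂)` consist of the numbers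
`∑ t_j x*A_j x` with `t` in the simplex and `x` a unit vector. For the convex hull, `M ↦ y*My` is
real-linear, and on `F̂` it takes the values `x*Bx` with `B = ∑ |y_j|² A_j ∈ conv {A_j}`; by the
Toeplitz–Hausdorff theorem `W(B)` is convex, so it contains `y*My` for all `M ∈ conv F̂`.
-/

open Complex Set
open scoped ComplexOrder

section QuadraticForm

variable {ι : Type*} [Fintype ι]

lemma star_dotProduct_self_eq_ofReal (v : ι → ℂ) :
    star v ⬝ᵥ v = ((∑ i, normSq (v i) : ℝ) : ℂ) := by
  simp [dotProduct, normSq_eq_conj_mul_self]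

lemma star_smul_dotProduct_smul (v : ι → ℂ) (c : ℂ) :
    star (c • v) ⬝ᵥ (c • v) = starRingEnd ℂ c * c * (star v ⬝ᵥ v) := by
  simp only [star_smul, smul_dotProduct, dotProduct_smul, smul_eq_mul, star_def]
  ring

lemma star_smul_dotProduct_mulVec_smul (M : Matrix ι ι ℂ) (v : ι → ℂ) (c : ℂ) :
    star (c • v) ⬝ᵥ M *ᵥ (c • v) = starRingEnd ℂ c * c * (star v ⬝ᵥ M *ᵥ v) := by
  simp only [star_smul, mulVec_smul, smul_dotProduct, dotProduct_smul, smul_eq_mul, star_def]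
  ring

lemma star_dotProduct_real_smul_add_mulVec (M : Matrix ι ι ℂ) (x y : ι → ℂ) (a b : ℝ) :
    star (a • x + b • y) ⬝ᵥ M *ᵥ (a • x + b • y) =
      (a ^ 2 : ℝ) • (star x ⬝ᵥ M *ᵥ x) +
        (a * b : ℝ) • (star x ⬝ᵥ M *ᵥ y + star y ⬝ᵥ M *ᵥ x) +
          (b ^ 2 : ℝ) • (star y ⬝ᵥ M *ᵥ y) := by
  simp only [star_add, star_smul, star_trivial, mulVec_add, mulVec_smul, add_dotProduct,
    dotProduct_add, smul_dotProduct, dotProduct_smul, smul_add, smul_smul]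
  module

lemma star_dotProduct_sum_smul_mulVec {κ : Type*} [Fintype κ] (A : κ → Matrix ι ι ℂ)
    (t : κ → ℝ) (x : ι → ℂ) :
    star x ⬝ᵥ (∑ j, t j • A j) *ᵥ x = ∑ j, t j • (star x ⬝ᵥ A j *ᵥ x) := by
  simp only [sum_mulVec, dotProduct_sum, smul_mulVec, dotProduct_smul]

lemma star_dotProduct_diagonal_mulVec [DecidableEq ι] (d y : ι → ℂ) :
    star y ⬝ᵥ diagonal d *ᵥ y = ∑ j, normSq (y j) • d j := by
  simp only [dotProduct, mulVec_diagonal, Pi.star_apply, real_smul, normSq_eq_conj_mul_self,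
    star_def]
  exact Finset.sum_congr rfl fun j _ => by ring

lemma isLinearMap_star_dotProduct_mulVec (x : ι → ℂ) :
    IsLinearMap ℝ fun M : Matrix ι ι ℂ => star x ⬝ᵥ M *ᵥ x where
  map_add M N := by simp only [add_mulVec, dotProduct_add]
  map_smul c M := by simp only [smul_mulVec, dotProduct_smul]

lemma normSq_mem_stdSimplex {y : ι → ℂ} (hy : star y ⬝ᵥ y = 1) :
    (fun j => normSq (y j)) ∈ stdSimplex ℝ ι :=
  ⟨fun _ => normSq_nonneg _, by exact_mod_cast (star_dotProduct_self_eq_ofReal y).symm.trans hy⟩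

lemma exists_unit_normSq_eq {t : ι → ℝ} (ht : t ∈ stdSimplex ℝ ι) :
    ∃ y : ι → ℂ, star y ⬝ᵥ y = 1 ∧ (fun j => normSq (y j)) = t := by
  have hsq : (fun j => normSq (Real.sqrt (t j) : ℂ)) = t := by
    funext j
    rw [normSq_ofReal, Real.mul_self_sqrt (ht.1 j)]
  refine ⟨fun j => (Real.sqrt (t j) : ℂ), ?_, hsq⟩
  simp only [star_dotProduct_self_eq_ofReal, congrFun hsq, ht.2, ofReal_one]

lemma convexHull_range_eq_image_stdSimplex {E : Type*} [AddCommGroup E] [Module ℝ E]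
    (v : ι → E) : convexHull ℝ (range v) = (fun t => ∑ j, t j • v j) '' stdSimplex ℝ ι := by
  classical
  have h := (Fintype.linearCombination ℝ v).image_convexHull (range fun j => Pi.single j 1)
  rw [← range_comp, convexHull_rangle_single_eq_stdSimplex] at h
  simp only [Function.comp_def, Fintype.linearCombination_apply_single, one_smul] at h
  exact h.symm

end QuadraticForm

lemma exists_unit_phase (α β : ℂ) :
    ∃ ω : ℂ, starRingEnd ℂ ω * ω = 1 ∧ (ω * α + starRingEnd ℂ ω * β).im = 0 := by
  set d := α - starRingEnd ℂ β
  set ω := exp (↑(-arg d) * I)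
  have hωd : ω * d = ‖d‖ := by
    conv_lhs => rw [← norm_mul_exp_arg_mul_I d]
    rw [mul_left_comm, ← exp_add, ofReal_neg, neg_mul, neg_add_cancel, exp_zero, mul_one]
  have hsplit : ω * α + starRingEnd ℂ ω * β =
      ω * d + (ω * starRingEnd ℂ β + starRingEnd ℂ (ω * starRingEnd ℂ β)) := by
    simp only [d, map_mul, conj_conj]
    ring
  refine ⟨ω, ?_, ?_⟩
  · rw [conj_mul', norm_exp_ofReal_mul_I, ofReal_one, one_pow]
  · rw [hsplit, hωd, add_conj]
    simp

lemma div_star_dotProduct_self_mem_numRange {k : ℕ} (M : Matrix (Fin k) (Fin k) ℂ)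
    {v : Fin k → ℂ} (hv : v ≠ 0) :
    (star v ⬝ᵥ M *ᵥ v) / (star v ⬝ᵥ v) ∈ numRange M := by
  set r := ∑ i, normSq (v i)
  have hvv : star v ⬝ᵥ v = r := star_dotProduct_self_eq_ofReal v
  have hr : 0 < r := zero_lt_real.mp (hvv ▸ dotProduct_star_self_pos_iff.mpr hv)
  have hc : starRingEnd ℂ ((Real.sqrt r)⁻¹ : ℝ) * ((Real.sqrt r)⁻¹ : ℝ) = (r : ℂ)⁻¹ := by
    rw [conj_ofReal, ← ofReal_mul, ← mul_inv, Real.mul_self_sqrt hr.le, ofReal_inv]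
  refine ⟨(((Real.sqrt r)⁻¹ : ℝ) : ℂ) • v, ?_, ?_⟩
  · rw [star_smul_dotProduct_smul, hc, hvv, inv_mul_cancel₀ (ofReal_ne_zero.mpr hr.ne')]
  · rw [star_smul_dotProduct_mulVec_smul, hc, hvv, div_eq_inv_mul]

/-- Along the segment from `x` to `y` the Rayleigh quotient of `Y` is real (this is where the
cross term being real enters), continuous, and runs from `0` to `1`. -/
lemma ofReal_mem_numRange_of_zero_one {k : ℕ} (Y : Matrix (Fin k) (Fin k) ℂ)
    {x y : Fin k → ℂ} (hx : star x ⬝ᵥ x = 1) (hy : star y ⬝ᵥ y = 1)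
    (hx0 : star x ⬝ᵥ Y *ᵥ x = 0) (hy1 : star y ⬝ᵥ Y *ᵥ y = 1)
    (hxy : (star x ⬝ᵥ Y *ᵥ y + star y ⬝ᵥ Y *ᵥ x).im = 0) {s : ℝ} (hs : s ∈ Icc 0 1) :
    (s : ℂ) ∈ numRange Y := by
  set z : ℝ → Fin k → ℂ := fun t => (1 - t) • x + t • y
  set f : ℝ → ℂ := fun t => (star (z t) ⬝ᵥ Y *ᵥ z t) / (star (z t) ⬝ᵥ z t)
  have hz : ∀ t ∈ Icc (0 : ℝ) 1, z t ≠ 0 := by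
    intro t ht h
    rcases eq_or_ne t 0 with rfl | ht0
    · simp only [z, sub_zero, one_smul, zero_smul, add_zero] at h
      simp [h] at hx
    · have hyx : y = algebraMap ℝ ℂ (-(1 - t) / t) • x := by
        rw [algebraMap_smul, ← inv_smul_smul₀ ht0 y, eq_neg_of_add_eq_zero_right h]
        module
      have := hy1
      rw [hyx, star_smul_dotProduct_mulVec_smul, hx0, mul_zero] at this
      exact zero_ne_one this
  have hf_im : ∀ t, (f t).im = 0 := by
    intro t
    have hnum : (star (z t) ⬝ᵥ Y *ᵥ z t).im = 0 := by
      simp only [z, star_dotProduct_real_smul_add_mulVec, hx0, hy1, add_im, smul_im, hxy]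
      simp
    simp [f, div_im, hnum, star_dotProduct_self_eq_ofReal]
  have hf_cont : ContinuousOn f (Icc 0 1) :=
    ContinuousOn.div (Continuous.continuousOn (by fun_prop))
      (Continuous.continuousOn (by fun_prop))
      fun t ht h => hz t ht (dotProduct_star_self_eq_zero.mp h)
  have hf0 : f 0 = 0 := by simp [f, z, hx0]
  have hf1 : f 1 = 1 := by simp [f, z, hy, hy1]
  obtain ⟨t, ht, hts⟩ := intermediate_value_Icc zero_le_one
    (continuous_re.comp_continuousOn hf_cont) (by simpa [hf0, hf1] using hs)
  have hft : f t = s := Complex.ext (by simpa using hts) (by simp [hf_im])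
  rw [← hft]
  exact div_star_dotProduct_self_mem_numRange Y (hz t ht)

theorem convex_numRange {k : ℕ} (X : Matrix (Fin k) (Fin k) ℂ) : Convex ℝ (numRange X) := by
  rw [convex_iff_segment_subset]
  rintro _ ⟨x, hx, rfl⟩ _ ⟨y, hy, rfl⟩
  set a := star x ⬝ᵥ X *ᵥ x
  set c := star y ⬝ᵥ X *ᵥ y
  rcases eq_or_ne a c with hac | hac
  · rw [hac, segment_same]
    exact singleton_subset_iff.mpr ⟨y, hy, rfl⟩
  have hca : c - a ≠ 0 := sub_ne_zero.mpr hac.symm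
  -- `Y` is the affine renormalization of `X` moving `a` to `0` and `c` to `1`.
  set Y := (c - a)⁻¹ • (X - a • 1)
  have hq : ∀ u, star u ⬝ᵥ X *ᵥ u = a * (star u ⬝ᵥ u) + (c - a) * (star u ⬝ᵥ Y *ᵥ u) := by
    intro u
    simp only [Y, smul_mulVec, sub_mulVec, one_mulVec, dotProduct_smul, dotProduct_sub,
      smul_eq_mul]
    field_simp
    ring
  have hx0 : star x ⬝ᵥ Y *ᵥ x = 0 := by
    have := hq x
    rw [hx, mul_one] at this
    exact (mul_eq_zero.mp (by linear_combination -this)).resolve_left hca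
  have hy1 : star y ⬝ᵥ Y *ᵥ y = 1 := by
    have := hq y
    rw [hy, mul_one] at this
    exact mul_left_cancel₀ hca (by linear_combination -this)
  -- Replacing `y` by `ω • y` makes the cross term real and changes neither norm nor value.
  obtain ⟨ω, hω, hxy⟩ := exists_unit_phase (star x ⬝ᵥ Y *ᵥ y) (star y ⬝ᵥ Y *ᵥ x)
  rw [segment_eq_image_lineMap]
  rintro _ ⟨s, hs, rfl⟩
  obtain ⟨u, hu, hus⟩ := ofReal_mem_numRange_of_zero_one Y hx
    (by rw [star_smul_dotProduct_smul, hω, hy, mul_one]) hx0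
    (by rw [star_smul_dotProduct_mulVec_smul, hω, hy1, mul_one])
    (by simpa only [mulVec_smul, dotProduct_smul, star_smul, smul_dotProduct, smul_eq_mul,
      star_def] using hxy) hs
  refine ⟨u, hu, ?_⟩
  rw [hq u, hu, ← hus, AffineMap.lineMap_apply_module', real_smul]
  ring

lemma numRange_diagonal {k : ℕ} (d : Fin k → ℂ) :
    numRange (diagonal d) = convexHull ℝ (range d) := by
  rw [convexHull_range_eq_image_stdSimplex]
  ext z
  constructor
  · rintro ⟨y, hy, rfl⟩
    exact ⟨_, normSq_mem_stdSimplex hy, (star_dotProduct_diagonal_mulVec d y).symm⟩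
  · rintro ⟨t, ht, rfl⟩
    obtain ⟨y, hy, rfl⟩ := exists_unit_normSq_eq ht
    exact ⟨y, hy, (star_dotProduct_diagonal_mulVec d y).symm⟩

lemma mem_numRangeSet {k : ℕ} {F : Set (Matrix (Fin k) (Fin k) ℂ)} {z : ℂ} :
    z ∈ numRangeSet F ↔ ∃ X ∈ F, z ∈ numRange X :=
  mem_iUnion₂.trans (by simp only [exists_prop])

lemma numRangeSet_mono {k : ℕ} {F G : Set (Matrix (Fin k) (Fin k) ℂ)} (h : F ⊆ G) :
    numRangeSet F ⊆ numRangeSet G :=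
  biUnion_subset_biUnion_left h

lemma mem_numRangeSet_convexHull_range {κ : Type*} [Fintype κ] {k : ℕ}
    (A : κ → Matrix (Fin k) (Fin k) ℂ) {z : ℂ} :
    z ∈ numRangeSet (convexHull ℝ (range A)) ↔
      ∃ t ∈ stdSimplex ℝ κ, ∃ x : Fin k → ℂ, star x ⬝ᵥ x = 1 ∧
        z = ∑ j, t j • (star x ⬝ᵥ A j *ᵥ x) := by
  simp only [mem_numRangeSet, convexHull_range_eq_image_stdSimplex, exists_mem_image, numRange,
    mem_ofPred_eq, star_dotProduct_sum_smul_mulVec]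

lemma numRangeSet_diagonal_eq {m k : ℕ} (A : Fin m → Matrix (Fin k) (Fin k) ℂ) :
    numRangeSet {M | ∃ x : Fin k → ℂ, star x ⬝ᵥ x = 1 ∧
      M = diagonal fun j => star x ⬝ᵥ A j *ᵥ x} = numRangeSet (convexHull ℝ (range A)) := by
  ext z
  rw [mem_numRangeSet_convexHull_range, mem_numRangeSet]
  constructor
  · rintro ⟨_, ⟨x, hx, rfl⟩, hz⟩
    rw [numRange_diagonal, convexHull_range_eq_image_stdSimplex] at hz
    obtain ⟨t, ht, rfl⟩ := hz
    exact ⟨t, ht, x, hx, rfl⟩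
  · rintro ⟨t, ht, x, hx, rfl⟩
    refine ⟨_, ⟨x, hx, rfl⟩, ?_⟩
    rw [numRange_diagonal, convexHull_range_eq_image_stdSimplex]
    exact ⟨t, ht, rfl⟩

lemma numRangeSet_convexHull_diagonal_subset {m k : ℕ} (A : Fin m → Matrix (Fin k) (Fin k) ℂ) :
    numRangeSet (convexHull ℝ {M | ∃ x : Fin k → ℂ, star x ⬝ᵥ x = 1 ∧
      M = diagonal fun j => star x ⬝ᵥ A j *ᵥ x}) ⊆ numRangeSet (convexHull ℝ (range A)) := by
  intro z hz
  obtain ⟨M, hM, y, hy, rfl⟩ := mem_numRangeSet.mp hz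
  set B := ∑ j, normSq (y j) • A j
  have hB : B ∈ convexHull ℝ (range A) := by
    rw [convexHull_range_eq_image_stdSimplex]
    exact ⟨_, normSq_mem_stdSimplex hy, rfl⟩
  have himage : (fun M => star y ⬝ᵥ M *ᵥ y) '' {M | ∃ x : Fin k → ℂ, star x ⬝ᵥ x = 1 ∧
      M = diagonal fun j => star x ⬝ᵥ A j *ᵥ x} ⊆ numRange B := by
    rintro _ ⟨_, ⟨x, hx, rfl⟩, rfl⟩
    exact ⟨x, hx, (star_dotProduct_diagonal_mulVec _ y).trans
      (star_dotProduct_sum_smul_mulVec A _ x).symm⟩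
  refine mem_numRangeSet.mpr ⟨B, hB, convexHull_min himage (convex_numRange B) ?_⟩
  rw [← (isLinearMap_star_dotProduct_mulVec y).image_convexHull]
  exact mem_image_of_mem _ hM

theorem stmt_15 {m n : ℕ} (A : Fin m → Matrix (Fin n) (Fin n) ℂ)
    (Fhat : Set (Matrix (Fin m) (Fin m) ℂ))
    (hFhat : Fhat = {M | ∃ x : Fin n → ℂ, star x ⬝ᵥ x = 1 ∧
      M = Matrix.diagonal fun i => star x ⬝ᵥ (A i).mulVec x}) :
    numRangeSet (convexHull ℝ (Set.range A)) = numRangeSet Fhat ∧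
      numRangeSet Fhat = numRangeSet (convexHull ℝ Fhat) := by
  subst hFhat
  have hW := numRangeSet_diagonal_eq A
  exact ⟨hW.symm, (numRangeSet_mono (subset_convexHull ℝ _)).antisymm
    ((numRangeSet_convexHull_diagonal_subset A).trans hW.ge)⟩
end
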